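/- arXiv:2006.00668 — 2 statements merged into one kernel-verified Lean document; each statement's English description precedes it below -/
import Mathlib

section
/- The function f(X) = 1 - (sin(2πX)/(2πX))² + (1/(2π)) · d/dX(sin(2πX)/(2πX)) · ∫₀^{2πX} (sin t)/t dt satisfies the fifth-order linear ODE X⁵f⁽⁵⁾ + 10X⁴f⁽⁴⁾ + (20π²X⁵ + 12X³)f⁽³⁾ + (64π²X⁴ - 40X²)f⁽²⁾ + (64π⁴X⁵ - 48π²X³ - 16X)f' + (-32π²X² + 16)f = 0. -/
open Real intervalIntegral

/-- Bulk two-point correlation of the circular β = 4 ensemble. -/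
noncomputable def f4 (X : ℝ) : ℝ :=
  1 - (Real.sin (2 * Real.pi * X) / (2 * Real.pi * X)) ^ 2 +
    (1 / (2 * Real.pi)) * deriv (fun Y => Real.sin (2 * Real.pi * Y) / (2 * Real.pi * Y)) X *
      ∫ t in (0 : ℝ)..(2 * Real.pi * X), Real.sin t / t

/-!
With `u = 2πX` we have `f4 X = 1 - s u ^ 2 + s' u * Si u`, where `s u = sin u / u` and `Si' = s`.
Using `cos² = 1 - sin²`, every derivative of this function has the shape
`p₀ + p₁ sin² u + p₂ sin u cos u + (q₁ sin u + q₂ cos u) Si u` with polynomial coefficients in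
`1 / u`, and differentiation acts on the coefficients by an explicit map. Iterating that map five
times turns the differential equation into an identity between polynomials.
-/

open Polynomial Set

theorem iteratedDeriv_eqOn_of_hasDerivAt {𝕜 E : Type*} [NontriviallyNormedField 𝕜]
    [NormedAddCommGroup E] [NormedSpace 𝕜 E] {f : 𝕜 → E} {F : ℕ → 𝕜 → E} {s : Set 𝕜}
    (hs : IsOpen s) (hf : EqOn f (F 0) s)
    (hF : ∀ n, ∀ x ∈ s, HasDerivAt (F n) (F (n + 1) x) x) (n : ℕ) :
    EqOn (iteratedDeriv n f) (F n) s := by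
  induction n with
  | zero => simpa using hf
  | succ n ih =>
    intro x hx
    rw [iteratedDeriv_succ, (ih.eventuallyEq_of_mem (hs.mem_nhds hx)).deriv_eq]
    exact (hF n x hx).deriv

noncomputable def sinIntegral (u : ℝ) : ℝ := ∫ t in (0 : ℝ)..u, sin t / t

theorem sinIntegral_eq_integral_sinc (u : ℝ) : sinIntegral u = ∫ t in (0 : ℝ)..u, sinc t :=
  integral_congr_ae <| by
    filter_upwards [MeasureTheory.Measure.ae_ne MeasureTheory.volume 0] with t ht _
    exact (sinc_of_ne_zero ht).symm

theorem hasDerivAt_sinIntegral (u : ℝ) : HasDerivAt sinIntegral (sinc u) u := by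
  rw [funext sinIntegral_eq_integral_sinc]
  exact (continuous_sinc.integral_hasStrictDerivAt 0 u).hasDerivAt

structure SincForm where
  p₀ : ℝ[X]
  p₁ : ℝ[X]
  p₂ : ℝ[X]
  q₁ : ℝ[X]
  q₂ : ℝ[X]

namespace SincForm

noncomputable def eval (F : SincForm) (u : ℝ) : ℝ :=
  F.p₀.eval u⁻¹ + F.p₁.eval u⁻¹ * sin u ^ 2 + F.p₂.eval u⁻¹ * (sin u * cos u) +
    (F.q₁.eval u⁻¹ * sin u + F.q₂.eval u⁻¹ * cos u) * sinIntegral u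

noncomputable def coeffDeriv (p : ℝ[X]) : ℝ[X] := -(X ^ 2 * derivative p)

theorem hasDerivAt_eval_inv (p : ℝ[X]) {u : ℝ} (hu : u ≠ 0) :
    HasDerivAt (fun u => p.eval u⁻¹) ((coeffDeriv p).eval u⁻¹) u := by
  refine ((p.hasDerivAt u⁻¹).comp u (hasDerivAt_inv hu)).congr_deriv ?_
  simp only [coeffDeriv, eval_neg, eval_mul, eval_pow, eval_X, inv_pow]
  ring

noncomputable def diff (F : SincForm) : SincForm where
  p₀ := coeffDeriv F.p₀ + F.p₂
  p₁ := coeffDeriv F.p₁ - 2 * F.p₂ + X * F.q₁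
  p₂ := coeffDeriv F.p₂ + 2 * F.p₁ + X * F.q₂
  q₁ := coeffDeriv F.q₁ - F.q₂
  q₂ := coeffDeriv F.q₂ + F.q₁

theorem hasDerivAt_eval (F : SincForm) {u : ℝ} (hu : u ≠ 0) :
    HasDerivAt F.eval (F.diff.eval u) u := by
  have hsin := hasDerivAt_sin u
  have hcos := hasDerivAt_cos u
  have hSi := hasDerivAt_sinIntegral u
  rw [sinc_of_ne_zero hu, div_eq_mul_inv] at hSi
  refine ((((hasDerivAt_eval_inv F.p₀ hu).add ((hasDerivAt_eval_inv F.p₁ hu).mul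
    (hsin.pow 2))).add ((hasDerivAt_eval_inv F.p₂ hu).mul (hsin.mul hcos))).add
    ((((hasDerivAt_eval_inv F.q₁ hu).mul hsin).add
    ((hasDerivAt_eval_inv F.q₂ hu).mul hcos)).mul hSi)).congr_deriv ?_
  simp only [eval, diff, Pi.add_apply, Pi.mul_apply, Pi.pow_apply, Polynomial.eval_add,
    Polynomial.eval_sub, Polynomial.eval_mul, Polynomial.eval_X, Polynomial.eval_ofNat]
  linear_combination F.p₂.eval u⁻¹ * sin_sq_add_cos_sq u

end SincForm

open SincForm

-- `1 - (sin u / u) ^ 2 + (u⁻¹ cos u - u⁻² sin u) Si u`, that is `f4` in the variable `u = 2πX`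
noncomputable def f4Form : SincForm := ⟨1, -X ^ 2, 0, -X ^ 2, X⟩

theorem f4_eq_eval {X : ℝ} (hX : X ≠ 0) : f4 X = f4Form.eval (2 * π * X) := by
  have hu : 2 * π * X ≠ 0 := by positivity
  have hlin : HasDerivAt (fun Y => 2 * π * Y) (2 * π) X := by
    simpa using (hasDerivAt_id X).const_mul (2 * π)
  have hquot : HasDerivAt (fun Y => sin (2 * π * Y) / (2 * π * Y)) _ X :=
    ((hasDerivAt_sin _).comp X hlin).div hlin hu
  rw [f4, hquot.deriv]
  simp only [SincForm.eval, f4Form, Function.comp_apply, sinIntegral, Polynomial.eval_one,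
    Polynomial.eval_neg, Polynomial.eval_pow, Polynomial.eval_X, Polynomial.eval_zero]
  field_simp
  ring

theorem iteratedDeriv_f4 (n : ℕ) {X : ℝ} (hX : X ≠ 0) :
    iteratedDeriv n f4 X = (2 * π) ^ n * (diff^[n] f4Form).eval (2 * π * X) := by
  refine iteratedDeriv_eqOn_of_hasDerivAt
    (F := fun n x => (2 * π) ^ n * (diff^[n] f4Form).eval (2 * π * x)) isOpen_ne
    (fun x hx => by simpa using f4_eq_eval hx) (fun n x hx => ?_) n hX
  have hu : 2 * π * x ≠ 0 := mul_ne_zero (by positivity) hx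
  refine (((hasDerivAt_eval _ hu).comp x ((hasDerivAt_id x).const_mul (2 * π))).const_mul
    ((2 * π) ^ n)).congr_deriv ?_
  simp only [Function.iterate_succ_apply', mul_one]
  ring

-- Divided by `u ^ 5` the equation is polynomial in `u⁻¹`, so `ring` checks it with `u⁻¹` as an atom.
theorem f4Form_ode_inv (u : ℝ) :
    (diff^[5] f4Form).eval u + 10 * u⁻¹ * (diff^[4] f4Form).eval u +
      (5 + 12 * u⁻¹ ^ 2) * (diff^[3] f4Form).eval u +
      (16 * u⁻¹ - 40 * u⁻¹ ^ 3) * (diff^[2] f4Form).eval u +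
      (4 - 12 * u⁻¹ ^ 2 - 16 * u⁻¹ ^ 4) * (diff^[1] f4Form).eval u +
      (16 * u⁻¹ ^ 5 - 8 * u⁻¹ ^ 3) * f4Form.eval u = 0 := by
  simp only [SincForm.eval, Function.iterate_succ_apply', Function.iterate_zero_apply, diff,
    coeffDeriv, f4Form, derivative_mul, derivative_X_pow, derivative_X, derivative_one,
    derivative_neg, derivative_sub, derivative_add, derivative_zero, derivative_ofNat,
    derivative_C, Polynomial.eval_add, Polynomial.eval_sub, Polynomial.eval_mul,
    Polynomial.eval_neg, Polynomial.eval_X, Polynomial.eval_pow, Polynomial.eval_one,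
    Polynomial.eval_zero, Polynomial.eval_ofNat, Polynomial.eval_C, map_ofNat, Nat.cast_ofNat]
  generalize u⁻¹ = v, sin u = s, cos u = c, sinIntegral u = i
  ring

theorem f4Form_ode {u : ℝ} (hu : u ≠ 0) :
    u ^ 5 * (diff^[5] f4Form).eval u + 10 * u ^ 4 * (diff^[4] f4Form).eval u +
      (5 * u ^ 5 + 12 * u ^ 3) * (diff^[3] f4Form).eval u +
      (16 * u ^ 4 - 40 * u ^ 2) * (diff^[2] f4Form).eval u +
      (4 * u ^ 5 - 12 * u ^ 3 - 16 * u) * (diff^[1] f4Form).eval u +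
      (16 - 8 * u ^ 2) * f4Form.eval u = 0 := by
  have h := f4Form_ode_inv u
  generalize (diff^[5] f4Form).eval u = e₅, (diff^[4] f4Form).eval u = e₄,
    (diff^[3] f4Form).eval u = e₃, (diff^[2] f4Form).eval u = e₂,
    (diff^[1] f4Form).eval u = e₁, f4Form.eval u = e₀ at h ⊢
  field_simp at h
  linear_combination h

/-- `f4` satisfies the fifth-order linear ODE. -/
theorem stmt_3 (X : ℝ) (hX : 0 < X) :
    X ^ 5 * iteratedDeriv 5 f4 X + 10 * X ^ 4 * iteratedDeriv 4 f4 X +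
      (20 * Real.pi ^ 2 * X ^ 5 + 12 * X ^ 3) * iteratedDeriv 3 f4 X +
      (64 * Real.pi ^ 2 * X ^ 4 - 40 * X ^ 2) * iteratedDeriv 2 f4 X +
      (64 * Real.pi ^ 4 * X ^ 5 - 48 * Real.pi ^ 2 * X ^ 3 - 16 * X) * deriv f4 X +
      (-32 * Real.pi ^ 2 * X ^ 2 + 16) * f4 X = 0 := by
  have hX₀ : X ≠ 0 := hX.ne'
  rw [← iteratedDeriv_one, iteratedDeriv_f4 5 hX₀, iteratedDeriv_f4 4 hX₀,
    iteratedDeriv_f4 3 hX₀, iteratedDeriv_f4 2 hX₀, iteratedDeriv_f4 1 hX₀, f4_eq_eval hX₀]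
  linear_combination f4Form_ode (u := 2 * π * X) (by positivity)
end

section
/- For the Hermite generating function setup, I(p,q,z) := ∫_{-∞}^{∞} e^{xz} H_p(x) H_q(x) e^{-x²} dx equals √π · 2^q · q! · e^{z²/4} · z^{p-q} · L_q^{(p-q)}(-z²/2), where H_p is the (physicists') Hermite polynomial and L_q^{(α)} the generalized Laguerre polynomial, for integers p ≥ q ≥ 0 and real z. -/
open Real MeasureTheory Finset

/-- Physicists' Hermite polynomials: `H₀ = 1`, `H₁ = 2x`,
`H_{n+2}(x) = 2x H_{n+1}(x) - 2(n+1) H_n(x)`. -/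
noncomputable def physHermite : ℕ → ℝ → ℝ
  | 0 => fun _ => 1
  | 1 => fun x => 2 * x
  | (n + 2) => fun x => 2 * x * physHermite (n + 1) x - 2 * (n + 1) * physHermite n x

/-- Generalized Laguerre polynomial `L_n^{(α)}(x) = Σ_{k=0}^n (-1)^k binom(n+α, n-k) x^k/k!`,
with `binom(n+α, n-k) = (Π_{j=k+1}^n (α+j)) / (n-k)!`. -/
noncomputable def genLaguerre (n : ℕ) (α : ℝ) (x : ℝ) : ℝ :=
  ∑ k ∈ Finset.range (n + 1),
    (-1 : ℝ) ^ k * (∏ j ∈ Finset.Icc (k + 1) n, (α + j)) / (Nat.factorial (n - k)) *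
      x ^ k / (Nat.factorial k)

/-! With the weight `w(x) = e^{xz - x²}`, integration by parts gives
`∫ 2x P w = z ∫ P w + ∫ P' w` for every polynomial `P`. Together with
`H_{n+1} = 2x H_n - H_n'` and `H_{n+1}' = 2(n+1) H_n` this yields `∫ H_p w = z^p ∫ w`
and the recursion `I(p+1, q+1) = z I(p+1, q) + 2(p+1) I(p, q)` for `I(p, q) = ∫ H_p H_q w`,
which is solved by `I(p, q) = √π e^{z²/4} Σ_j C(p,j) C(q,j) j! 2^j z^{p-j} z^{q-j}`.
Reindexing by `k = q - j` turns this sum into the Laguerre polynomial. -/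

open Polynomial

/-- The recursion of Mathlib's probabilists' `Polynomial.hermite`, with `2X` in place of `X`. -/
noncomputable def physHermitePoly : ℕ → ℝ[X]
  | 0 => 1
  | n + 1 => 2 * X * physHermitePoly n - derivative (physHermitePoly n)

theorem physHermitePoly_succ (n : ℕ) :
    physHermitePoly (n + 1) = 2 * X * physHermitePoly n - derivative (physHermitePoly n) :=
  rfl

theorem derivative_physHermitePoly_succ (n : ℕ) :
    derivative (physHermitePoly (n + 1)) = (2 * (n + 1) : ℝ) • physHermitePoly n := by
  induction n with
  | zero => simp [physHermitePoly, smul_eq_C_mul, map_ofNat C 2]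
  | succ n ih =>
    rw [physHermitePoly_succ (n + 1), derivative_sub, derivative_mul, ih, derivative_smul,
      physHermitePoly_succ n]
    simp only [smul_eq_C_mul, derivative_mul, derivative_ofNat, derivative_X, map_mul, map_add,
      map_ofNat, map_natCast, map_one, Nat.cast_add, Nat.cast_one]
    ring

theorem physHermitePoly_add_two (n : ℕ) :
    physHermitePoly (n + 2)
      = 2 * X * physHermitePoly (n + 1) - (2 * (n + 1) : ℝ) • physHermitePoly n := by
  rw [physHermitePoly_succ (n + 1), derivative_physHermitePoly_succ]

theorem eval_physHermitePoly (n : ℕ) (x : ℝ) :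
    (physHermitePoly n).eval x = physHermite n x := by
  induction n using Nat.twoStepInduction with
  | zero => simp [physHermitePoly, physHermite]
  | one => simp [physHermitePoly, physHermite]
  | more n ih₀ ih₁ =>
    simp [physHermitePoly_add_two, physHermite, ih₀, ih₁]

theorem integrable_eval_mul_exp_neg_sq (P : ℝ[X]) :
    Integrable fun x : ℝ => P.eval x * exp (-x ^ 2) := by
  induction P using Polynomial.induction_on' with
  | add P Q hP hQ => simpa only [eval_add, add_mul] using hP.fun_add hQ
  | monomial n a =>
    have h := (integrable_rpow_mul_exp_neg_mul_sq one_pos (s := n)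
      (by linarith [n.cast_nonneg (α := ℝ)])).const_mul a
    simpa [rpow_natCast, mul_assoc] using h

theorem integrable_eval_mul_exp_mul_sub_sq (P : ℝ[X]) (z : ℝ) :
    Integrable fun x : ℝ => P.eval x * exp (x * z - x ^ 2) := by
  have h := ((integrable_eval_mul_exp_neg_sq (P.comp (X + C (z / 2)))).comp_sub_right
    (z / 2)).const_mul (exp (z ^ 2 / 4))
  refine h.congr (ae_of_all _ fun x => ?_)
  simp only [eval_comp, eval_add, eval_X, eval_C, sub_add_cancel]
  rw [mul_left_comm, ← exp_add]
  ring_nf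

noncomputable def tiltedGaussIntegral (z : ℝ) : ℝ[X] →ₗ[ℝ] ℝ where
  toFun P := ∫ x, P.eval x * exp (x * z - x ^ 2)
  map_add' P Q := by
    simp only [eval_add, add_mul]
    exact integral_add (integrable_eval_mul_exp_mul_sub_sq P z)
      (integrable_eval_mul_exp_mul_sub_sq Q z)
  map_smul' c P := by
    simp only [eval_smul, smul_eq_mul, mul_assoc, RingHom.id_apply]
    exact integral_const_mul c _

theorem tiltedGaussIntegral_apply (z : ℝ) (P : ℝ[X]) :
    tiltedGaussIntegral z P = ∫ x, P.eval x * exp (x * z - x ^ 2) :=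
  rfl

theorem tiltedGaussIntegral_one (z : ℝ) : tiltedGaussIntegral z 1 = √π * exp (z ^ 2 / 4) := by
  have h (x : ℝ) : exp (x * z - x ^ 2) = exp (z ^ 2 / 4) * exp (-(x - z / 2) ^ 2) := by
    rw [← exp_add]; ring_nf
  have hgauss : ∫ x : ℝ, exp (-x ^ 2) = √π := by simpa using integral_gaussian 1
  simp only [tiltedGaussIntegral_apply, eval_one, one_mul, h, integral_const_mul,
    integral_sub_right_eq_self (fun x => exp (-x ^ 2)), hgauss]
  ring

theorem tiltedGaussIntegral_two_mul_X_mul (z : ℝ) (P : ℝ[X]) :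
    tiltedGaussIntegral z (2 * X * P)
      = z * tiltedGaussIntegral z P + tiltedGaussIntegral z (derivative P) := by
  have hderiv : ∀ x : ℝ, HasDerivAt (fun x => P.eval x * exp (x * z - x ^ 2))
      ((derivative P + z • P - 2 * X * P).eval x * exp (x * z - x ^ 2)) x := fun x => by
    have hexp : HasDerivAt (fun x => exp (x * z - x ^ 2))
        (exp (x * z - x ^ 2) * (z - 2 * x)) x := by
      simpa using (((hasDerivAt_id x).mul_const z).sub (hasDerivAt_pow 2 x)).exp
    refine ((P.hasDerivAt x).fun_mul hexp).congr_deriv ?_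
    simp only [eval_sub, eval_add, eval_smul, eval_mul, eval_X, eval_ofNat, smul_eq_mul]
    ring
  have h := integral_eq_zero_of_hasDerivAt_of_integrable hderiv
    (integrable_eval_mul_exp_mul_sub_sq _ z) (integrable_eval_mul_exp_mul_sub_sq P z)
  rw [← tiltedGaussIntegral_apply, map_sub, map_add, map_smul, smul_eq_mul] at h
  linarith

theorem tiltedGaussIntegral_physHermitePoly (z : ℝ) (n : ℕ) :
    tiltedGaussIntegral z (physHermitePoly n) = z ^ n * tiltedGaussIntegral z 1 := by
  induction n with
  | zero => simp [physHermitePoly]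
  | succ n ih =>
    rw [physHermitePoly_succ, map_sub, tiltedGaussIntegral_two_mul_X_mul, ih]
    ring

theorem tiltedGaussIntegral_physHermitePoly_mul_succ_succ (z : ℝ) (p q : ℕ) :
    tiltedGaussIntegral z (physHermitePoly (p + 1) * physHermitePoly (q + 1))
      = z * tiltedGaussIntegral z (physHermitePoly (p + 1) * physHermitePoly q)
        + 2 * (p + 1) * tiltedGaussIntegral z (physHermitePoly p * physHermitePoly q) := by
  have hsplit : physHermitePoly (p + 1) * physHermitePoly (q + 1)
      = 2 * X * (physHermitePoly (p + 1) * physHermitePoly q)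
        - physHermitePoly (p + 1) * derivative (physHermitePoly q) := by
    rw [physHermitePoly_succ q]; ring
  rw [hsplit, map_sub, tiltedGaussIntegral_two_mul_X_mul, derivative_mul,
    derivative_physHermitePoly_succ, smul_mul_assoc, map_add, map_smul, smul_eq_mul]
  ring

noncomputable def hermiteMomentSum (p q : ℕ) (z : ℝ) : ℝ :=
  ∑ j ∈ range (q + 1),
    (q.choose j : ℝ) * ((p.choose j * j.factorial * 2 ^ j : ℝ) * z ^ (p - j) * z ^ (q - j))

theorem hermiteMomentSum_zero_right (p : ℕ) (z : ℝ) : hermiteMomentSum p 0 z = z ^ p := by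
  simp [hermiteMomentSum]

theorem hermiteMomentSum_zero_left (q : ℕ) (z : ℝ) : hermiteMomentSum 0 q z = z ^ q := by
  simp [hermiteMomentSum, sum_range_succ']

theorem hermiteMomentSum_succ_succ (p q : ℕ) (z : ℝ) :
    hermiteMomentSum (p + 1) (q + 1) z
      = z * hermiteMomentSum (p + 1) q z + 2 * (p + 1) * hermiteMomentSum p q z := by
  have h := sum_choose_succ_mul
    (fun j r => ((p + 1).choose j * j.factorial * 2 ^ j : ℝ) * z ^ (p + 1 - j) * z ^ r) q
  rw [hermiteMomentSum, h, hermiteMomentSum, hermiteMomentSum, mul_sum, mul_sum]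
  congr 1 <;> refine sum_congr rfl fun j hj => ?_
  · rw [Nat.sub_add_comm (Nat.lt_succ_iff.mp (mem_range.mp hj)), pow_succ]
    ring
  · have hchoose : ((p + 1).choose (j + 1) : ℝ) * (j + 1) = (p + 1) * p.choose j := by
      exact_mod_cast (Nat.add_one_mul_choose_eq p j).symm
    rw [Nat.add_sub_add_right, Nat.factorial_succ, pow_succ]
    push_cast
    linear_combination
      (2 * (q.choose j : ℝ) * j.factorial * 2 ^ j * z ^ (p - j) * z ^ (q - j)) * hchoose

theorem factorial_mul_prod_Icc_add (m k n : ℕ) (hkn : k ≤ n) :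
    ((m + k).factorial : ℝ) * ∏ i ∈ Icc (k + 1) n, ((m : ℝ) + i) = (m + n).factorial := by
  induction n, hkn using Nat.le_induction with
  | base => simp
  | succ n hkn ih =>
    rw [prod_Icc_succ_top (by omega), ← mul_assoc, ih, ← add_assoc, Nat.factorial_succ]
    push_cast
    ring

theorem hermiteMomentSum_eq_genLaguerre (p q : ℕ) (hpq : q ≤ p) (z : ℝ) :
    hermiteMomentSum p q z
      = 2 ^ q * q.factorial * z ^ (p - q) * genLaguerre q (p - q) (-z ^ 2 / 2) := by
  obtain ⟨m, rfl⟩ := Nat.exists_eq_add_of_le' hpq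
  rw [hermiteMomentSum, genLaguerre, ← sum_range_reflect, mul_sum]
  refine sum_congr rfl fun k hk => ?_
  obtain ⟨j, rfl⟩ := Nat.exists_eq_add_of_le' (Nat.lt_succ_iff.mp (mem_range.mp hk))
  have hprod := factorial_mul_prod_Icc_add m k (j + k) (by omega)
  have hα : ((m + (j + k) : ℕ) : ℝ) - ((j + k : ℕ) : ℝ) = m := by push_cast; ring
  have hsub : m + (j + k) - j = m + k := by omega
  simp only [hα, add_tsub_cancel_right, add_tsub_cancel_left, hsub]
  rw [eq_div_of_mul_eq (by positivity) ((mul_comm _ _).trans hprod),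
    Nat.cast_choose ℝ (by omega : j ≤ m + (j + k)), hsub, Nat.cast_add_choose,
    neg_div, neg_pow (z ^ 2 / 2), div_pow]
  field_simp
  rw [← pow_mul, mul_comm k 2, pow_mul, neg_one_sq, one_pow]
  ring

theorem tiltedGaussIntegral_physHermitePoly_mul (z : ℝ) (p q : ℕ) :
    tiltedGaussIntegral z (physHermitePoly p * physHermitePoly q)
      = hermiteMomentSum p q z * tiltedGaussIntegral z 1 := by
  induction q generalizing p with
  | zero =>
    rw [physHermitePoly, mul_one, tiltedGaussIntegral_physHermitePoly,
      hermiteMomentSum_zero_right]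
  | succ q ih =>
    cases p with
    | zero =>
      rw [physHermitePoly, one_mul, tiltedGaussIntegral_physHermitePoly,
        hermiteMomentSum_zero_left]
    | succ p =>
      rw [tiltedGaussIntegral_physHermitePoly_mul_succ_succ, ih, ih, hermiteMomentSum_succ_succ]
      ring

/-- `∫ e^{xz} H_p(x) H_q(x) e^{-x²} dx = √π 2^q q! e^{z²/4} z^{p-q} L_q^{(p-q)}(-z²/2)`
for `p ≥ q ≥ 0`. -/
theorem stmt_6 (p q : ℕ) (hpq : q ≤ p) (z : ℝ) :
    ∫ x : ℝ, Real.exp (x * z) * physHermite p x * physHermite q x * Real.exp (-x ^ 2) =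
      Real.sqrt Real.pi * 2 ^ q * (Nat.factorial q) * Real.exp (z ^ 2 / 4) * z ^ (p - q) *
        genLaguerre q (p - q) (-z ^ 2 / 2) := by
  have hintegrand : ∀ x : ℝ, exp (x * z) * physHermite p x * physHermite q x * exp (-x ^ 2)
      = (physHermitePoly p * physHermitePoly q).eval x * exp (x * z - x ^ 2) := fun x => by
    rw [eval_mul, eval_physHermitePoly, eval_physHermitePoly, sub_eq_add_neg, exp_add]
    ring
  simp_rw [hintegrand]
  rw [← tiltedGaussIntegral_apply, tiltedGaussIntegral_physHermitePoly_mul,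
    hermiteMomentSum_eq_genLaguerre p q hpq, tiltedGaussIntegral_one]
  ring
end
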